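/- Suppose ε ∈ (0,1/2] and r ∈ (0,1), and X = (X_k)_{k∈ℤ} is a strictly stationary Markov chain satisfying Condition 𝒮(ε,r). Then: (II) for each positive integer n and each (i,j) ∈ {0,1}², P(X_n = j | X_0 = i) = p^{(ε, r^n)}_{ij} (the n-step transition probability matrix is ℙ^{(ε, r^n)}); and (III) for each positive integer n: ρ_X(n) = r^n, α_X(n) = (1−ε)ε·r^n ≥ ε·r^n/2, and β_X(n) = 2(1−ε)ε·r^n ≤ 2ε·r^n. -/

import Mathlib

open MeasureTheory ProbabilityTheory Filter Set

noncomputable section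

namespace Bradley

variable {Ω : Type*} [MeasurableSpace Ω]

/-- The strong mixing (α-mixing) coefficient between two sub-σ-fields. -/
def alphaMix (P : Measure Ω) (𝓐 𝓑 : MeasurableSpace Ω) : ℝ :=
  sSup {x : ℝ | ∃ A B : Set Ω, MeasurableSet[𝓐] A ∧ MeasurableSet[𝓑] B ∧
    x = |(P (A ∩ B)).toReal - (P A).toReal * (P B).toReal|}

/-- `A : Fin n → Set Ω` is a finite partition of `Ω` into `𝓐`-measurable pieces. -/
def IsFinitePartitionIn (𝓐 : MeasurableSpace Ω) {n : ℕ} (A : Fin n → Set Ω) : Prop :=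
  (∀ i, MeasurableSet[𝓐] (A i)) ∧ Pairwise (Function.onFun Disjoint A) ∧ (⋃ i, A i) = Set.univ

/-- The absolute regularity (β-mixing) coefficient between two sub-σ-fields. -/
def betaMix (P : Measure Ω) (𝓐 𝓑 : MeasurableSpace Ω) : ℝ :=
  sSup {x : ℝ | ∃ (m n : ℕ) (A : Fin m → Set Ω) (B : Fin n → Set Ω),
    IsFinitePartitionIn 𝓐 A ∧ IsFinitePartitionIn 𝓑 B ∧
    x = (1/2) * ∑ i, ∑ j, |(P (A i ∩ B j)).toReal - (P (A i)).toReal * (P (B j)).toReal|}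

/-- Covariance of two real random variables. -/
def cov {Ω : Type*} {_ : MeasurableSpace Ω} (P : Measure Ω) (Y Z : Ω → ℝ) : ℝ :=
  ∫ ω, (Y ω - ∫ a, Y a ∂P) * (Z ω - ∫ a, Z a ∂P) ∂P

/-- Correlation of two real random variables. -/
def corr {Ω : Type*} {_ : MeasurableSpace Ω} (P : Measure Ω) (Y Z : Ω → ℝ) : ℝ :=
  cov P Y Z / (Real.sqrt (variance Y P) * Real.sqrt (variance Z P))

/-- The maximal correlation (ρ-mixing) coefficient between two sub-σ-fields. -/
def rhoMix (P : Measure Ω) (𝓐 𝓑 : MeasurableSpace Ω) : ℝ :=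
  sSup {x : ℝ | ∃ Y Z : Ω → ℝ, Measurable[𝓐] Y ∧ Measurable[𝓑] Z ∧
    MemLp Y 2 P ∧ MemLp Z 2 P ∧ 0 < variance Y P ∧ 0 < variance Z P ∧
    x = |corr P Y Z|}

/-- Strict stationarity of a two-sided sequence of real random variables. -/
def StrictlyStationary (P : Measure Ω) (X : ℤ → Ω → ℝ) : Prop :=
  ∀ j : ℤ, Measure.map (fun ω (k : ℤ) => X (k + j) ω) P
    = Measure.map (fun ω (k : ℤ) => X k ω) P

/-- Reversibility: the time-reversed sequence has the same distribution. -/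
def Reversible (P : Measure Ω) (X : ℤ → Ω → ℝ) : Prop :=
  Measure.map (fun ω (k : ℤ) => X (-k) ω) P = Measure.map (fun ω (k : ℤ) => X k ω) P

/-- The σ-field generated by `X j`, `j ≤ k`. -/
def pastSigma (X : ℤ → Ω → ℝ) (k : ℤ) : MeasurableSpace Ω :=
  ⨆ j ≤ k, MeasurableSpace.comap (X j) inferInstance

/-- The σ-field generated by `X j`, `j ≥ k`. -/
def futureSigma (X : ℤ → Ω → ℝ) (k : ℤ) : MeasurableSpace Ω :=
  ⨆ (j) (_ : k ≤ j), MeasurableSpace.comap (X j) inferInstance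

/-- Conditional independence of the σ-fields `mA` and `mB` given the σ-field `m`:
for all events `A ∈ mA`, `B ∈ mB`, `E[1_{A∩B} | m] = E[1_A | m] · E[1_B | m]` a.e. -/
def CondIndepGiven (P : Measure Ω) (m mA mB : MeasurableSpace Ω) : Prop :=
  ∀ A B : Set Ω, MeasurableSet[mA] A → MeasurableSet[mB] B →
    MeasureTheory.condExp m P ((A ∩ B).indicator fun _ => (1 : ℝ))
      =ᵐ[P] fun ω => MeasureTheory.condExp m P (A.indicator fun _ => (1 : ℝ)) ω
        * MeasureTheory.condExp m P (B.indicator fun _ => (1 : ℝ)) ω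

/-- Markov property: for every `k`, past and future are conditionally
independent given `σ(X k)`. -/
def IsMarkovChain (P : Measure Ω) (X : ℤ → Ω → ℝ) : Prop :=
  ∀ k : ℤ, CondIndepGiven P (MeasurableSpace.comap (X k) inferInstance)
    (pastSigma X k) (futureSigma X k)

/-- `α_X(n)`. -/
def alphaX (P : Measure Ω) (X : ℤ → Ω → ℝ) (n : ℕ) : ℝ :=
  alphaMix P (pastSigma X 0) (futureSigma X n)

/-- `β_X(n)`. -/
def betaX (P : Measure Ω) (X : ℤ → Ω → ℝ) (n : ℕ) : ℝ :=
  betaMix P (pastSigma X 0) (futureSigma X n)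

/-- `ρ_X(n)`. -/
def rhoX (P : Measure Ω) (X : ℤ → Ω → ℝ) (n : ℕ) : ℝ :=
  rhoMix P (pastSigma X 0) (futureSigma X n)

/-- The joint-probability matrix `Λ^{(ε,θ)}`. -/
def lam (ε θ : ℝ) (i j : Fin 2) : ℝ :=
  if i = 0 then
    (if j = 0 then (1 - ε) ^ 2 + (1 - ε) * ε * θ else (1 - ε) * ε - (1 - ε) * ε * θ)
  else
    (if j = 0 then (1 - ε) * ε - (1 - ε) * ε * θ else ε ^ 2 + (1 - ε) * ε * θ)

/-- The transition-probability matrix `ℙ^{(ε,θ)}`. -/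
def pmat (ε θ : ℝ) (i j : Fin 2) : ℝ :=
  if i = 0 then
    (if j = 0 then (1 - ε) + ε * θ else ε - ε * θ)
  else
    (if j = 0 then (1 - ε) - (1 - ε) * θ else ε + (1 - ε) * θ)

/-- Slope `ζ_{v,y}` of the chord of `g` from `v` to `y`. -/
def chordSlope (g : ℝ → ℝ) (v y : ℝ) : ℝ := (g y - g v) / (y - v)

/-- The chord (affine) function `C_{v,y}` (extended to all of `ℝ`). -/
def chordLine (g : ℝ → ℝ) (v y x : ℝ) : ℝ := g v + chordSlope g v y * (x - v)

/-- `M_{v,y} := sup_{x ∈ [v,y]} (C_{v,y}(x) − g(x))`. -/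
def Mvy (g : ℝ → ℝ) (v y : ℝ) : ℝ :=
  sSup ((fun x => chordLine g v y x - g x) '' Set.Icc v y)

/-- `g(x) := x·log₂ r + log₂ f(x)`. -/
def gOf (r : ℝ) (f : ℝ → ℝ) (x : ℝ) : ℝ := x * Real.logb 2 r + Real.logb 2 (f x)

/-- Condition 𝒮(ε,θ): a strictly stationary Markov chain with state space
{0,1}, marginal distribution (1−ε, ε), and one-step transition matrix
ℙ^{(ε,θ)}. -/
def ConditionS {Ω : Type*} [MeasurableSpace Ω] (P : Measure Ω) (X : ℤ → Ω → ℝ)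
    (ε θ : ℝ) : Prop :=
  StrictlyStationary P X ∧ IsMarkovChain P X ∧
  (∀ k ω, X k ω = 0 ∨ X k ω = 1) ∧
  P {ω | X 0 ω = 0} = ENNReal.ofReal (1 - ε) ∧
  P {ω | X 0 ω = 1} = ENNReal.ofReal ε ∧
  (∀ i j : Fin 2,
    ProbabilityTheory.cond P {ω | X 0 ω = ((i : ℕ) : ℝ)} {ω | X 1 ω = ((j : ℕ) : ℝ)}
      = ENNReal.ofReal (pmat ε θ i j))


/-! ### Auxiliary machinery for the proof -/

section AuxMachinery

set_option linter.unusedSectionVars false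

/-- Fiber constancy for comap-measurable functions. -/
lemma comap_constant' {β γ : Type*} [MeasurableSpace β] [MeasurableSpace γ]
    [MeasurableSingletonClass γ]
    {g : Ω → β} {f : Ω → γ} (hf : Measurable[MeasurableSpace.comap g inferInstance] f)
    {ω ω' : Ω} (h : g ω = g ω') : f ω = f ω' := by
  obtain ⟨T, -, hTeq⟩ := hf (measurableSet_singleton (f ω'))
  have hω' : ω' ∈ g ⁻¹' T := by rw [hTeq]; exact rfl
  have : ω ∈ g ⁻¹' T := by simpa [Set.mem_preimage, h] using hω'
  rw [hTeq] at this; exact this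

end AuxMachinery

section AuxMachinery2

set_option linter.unusedSectionVars false

variable {Ω' : Type*} [m0 : MeasurableSpace Ω']

/-- The key factorization: conditional independence given `σ(g)` factorizes
probabilities over each fiber event of `g`. -/
lemma star_lemma {P : Measure Ω'} [IsProbabilityMeasure P] {g : Ω' → ℝ} (hg : Measurable g)
    (c : ℝ) (hpos : P (g ⁻¹' {c}) ≠ 0)
    {A B : Set Ω'} (hA : MeasurableSet A) (hB : MeasurableSet B)
    (hmain : MeasureTheory.condExp (MeasurableSpace.comap g inferInstance) P
        ((A ∩ B).indicator fun _ => (1 : ℝ))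
      =ᵐ[P] fun ω =>
        MeasureTheory.condExp (MeasurableSpace.comap g inferInstance) P
          (A.indicator fun _ => (1 : ℝ)) ω
        * MeasureTheory.condExp (MeasurableSpace.comap g inferInstance) P
          (B.indicator fun _ => (1 : ℝ)) ω) :
    (P (g ⁻¹' {c} ∩ (A ∩ B))).toReal * (P (g ⁻¹' {c})).toReal
      = (P (g ⁻¹' {c} ∩ A)).toReal * (P (g ⁻¹' {c} ∩ B)).toReal := by
  have hm : MeasurableSpace.comap g inferInstance ≤ m0 := hg.comap_le
  haveI : IsFiniteMeasure (P.trim hm) := isFiniteMeasure_trim hm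
  haveI : SigmaFinite (P.trim hm) := inferInstance
  have hSm : MeasurableSet[MeasurableSpace.comap g inferInstance] (g ⁻¹' {c}) :=
    ⟨{c}, measurableSet_singleton _, rfl⟩
  have hS : MeasurableSet (g ⁻¹' {c}) := hm _ hSm
  have hSne : (g ⁻¹' {c}).Nonempty := by
    rw [Set.nonempty_iff_ne_empty]
    intro h; rw [h] at hpos; exact hpos measure_empty
  obtain ⟨ω₀, hω₀⟩ := hSne
  set f₁ := MeasureTheory.condExp (MeasurableSpace.comap g inferInstance) P
    (A.indicator fun _ => (1 : ℝ)) with hf₁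
  set f₂ := MeasureTheory.condExp (MeasurableSpace.comap g inferInstance) P
    (B.indicator fun _ => (1 : ℝ)) with hf₂
  have hconst : ∀ (f : Ω' → ℝ), Measurable[MeasurableSpace.comap g inferInstance] f →
      ∀ ω ∈ g ⁻¹' {c}, f ω = f ω₀ := by
    intro f hf ω hω
    exact comap_constant' hf (by rw [show g ω = c from hω, show g ω₀ = c from hω₀])
  have hf₁m : Measurable[MeasurableSpace.comap g inferInstance] f₁ :=
    stronglyMeasurable_condExp.measurable
  have hf₂m : Measurable[MeasurableSpace.comap g inferInstance] f₂ :=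
    stronglyMeasurable_condExp.measurable
  have hind : ∀ (C : Set Ω'), MeasurableSet C →
      ∫ ω in g ⁻¹' {c}, (C.indicator fun _ => (1 : ℝ)) ω ∂P
        = (P (g ⁻¹' {c} ∩ C)).toReal := by
    intro C hC
    rw [setIntegral_indicator hC, setIntegral_const, smul_eq_mul, mul_one, measureReal_def]
  have key : ∀ (C : Set Ω') (hC : MeasurableSet C) (f : Ω' → ℝ),
      f = MeasureTheory.condExp (MeasurableSpace.comap g inferInstance) P
        (C.indicator fun _ => (1 : ℝ)) →
      f ω₀ * (P (g ⁻¹' {c})).toReal = (P (g ⁻¹' {c} ∩ C)).toReal := by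
    intro C hC f hfeq
    have hfm : Measurable[MeasurableSpace.comap g inferInstance] f :=
      hfeq ▸ stronglyMeasurable_condExp.measurable
    have h1 : ∫ ω in g ⁻¹' {c}, f ω ∂P
        = ∫ ω in g ⁻¹' {c}, (C.indicator fun _ => (1 : ℝ)) ω ∂P := by
      rw [hfeq]; exact setIntegral_condExp hm ((integrable_const 1).indicator hC) hSm
    have h2 : ∫ ω in g ⁻¹' {c}, f ω ∂P = (P (g ⁻¹' {c})).toReal * f ω₀ := by
      rw [setIntegral_congr_fun hS (fun ω hω => hconst f hfm ω hω), setIntegral_const,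
        smul_eq_mul, measureReal_def]
    rw [← hind C hC, ← h1, h2, mul_comm]
  have hienAB : Integrable ((A ∩ B).indicator fun _ => (1 : ℝ)) P :=
    (integrable_const 1).indicator (hA.inter hB)
  have h3 : ∫ ω in g ⁻¹' {c},
        MeasureTheory.condExp (MeasurableSpace.comap g inferInstance) P
          ((A ∩ B).indicator fun _ => (1 : ℝ)) ω ∂P
      = ∫ ω in g ⁻¹' {c}, f₁ ω * f₂ ω ∂P :=
    setIntegral_congr_ae hS (hmain.mono fun ω hω _ => hω)
  have h4 : ∫ ω in g ⁻¹' {c},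
        MeasureTheory.condExp (MeasurableSpace.comap g inferInstance) P
          ((A ∩ B).indicator fun _ => (1 : ℝ)) ω ∂P
      = (P (g ⁻¹' {c} ∩ (A ∩ B))).toReal := by
    rw [setIntegral_condExp hm hienAB hSm]; exact hind _ (hA.inter hB)
  have h5 : ∫ ω in g ⁻¹' {c}, f₁ ω * f₂ ω ∂P
      = (P (g ⁻¹' {c})).toReal * (f₁ ω₀ * f₂ ω₀) := by
    rw [setIntegral_congr_fun hS (fun ω hω => by
      rw [hconst f₁ hf₁m ω hω, hconst f₂ hf₂m ω hω]), setIntegral_const, smul_eq_mul, measureReal_def]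
  have hA1 := key A hA f₁ hf₁
  have hB1 := key B hB f₂ hf₂
  calc (P (g ⁻¹' {c} ∩ (A ∩ B))).toReal * (P (g ⁻¹' {c})).toReal
      = ((P (g ⁻¹' {c})).toReal * (f₁ ω₀ * f₂ ω₀)) * (P (g ⁻¹' {c})).toReal := by
        rw [← h5, ← h3, h4]
    _ = (f₁ ω₀ * (P (g ⁻¹' {c})).toReal) * (f₂ ω₀ * (P (g ⁻¹' {c})).toReal) := by ring
    _ = (P (g ⁻¹' {c} ∩ A)).toReal * (P (g ⁻¹' {c} ∩ B)).toReal := by rw [hA1, hB1]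

variable {P : Measure Ω'} [IsProbabilityMeasure P]

lemma cond_toReal' {S : Set Ω'} (hS : MeasurableSet S) (A : Set Ω') :
    (P[|S] A).toReal = (P (S ∩ A)).toReal / (P S).toReal := by
  rw [cond_apply hS, ENNReal.toReal_mul, ENNReal.toReal_inv, inv_mul_eq_div]

lemma integrable_cond' {S : Set Ω'} {f : Ω' → ℝ} (hpos : P S ≠ 0) (hf : Integrable f P) :
    Integrable f P[|S] := by
  rw [ProbabilityTheory.cond]
  exact (hf.restrict).smul_measure (ENNReal.inv_ne_top.2 hpos)

lemma memLp_cond' {S : Set Ω'} {f : Ω' → ℝ} (hpos : P S ≠ 0) (hf : MemLp f 2 P) :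
    MemLp f 2 P[|S] := by
  rw [ProbabilityTheory.cond]
  exact (hf.restrict S).smul_measure (ENNReal.inv_ne_top.2 hpos)

lemma setIntegral_eq_cond' {S : Set Ω'} (hpos : P S ≠ 0) (f : Ω' → ℝ) :
    ∫ x in S, f x ∂P = (P S).toReal * ∫ x, f x ∂P[|S] := by
  rw [ProbabilityTheory.cond, integral_smul_measure, ENNReal.toReal_inv, smul_eq_mul,
    ← mul_assoc, mul_inv_cancel₀ (ENNReal.toReal_ne_zero.2 ⟨hpos, measure_ne_top _ _⟩), one_mul]

lemma integral_decomp' {S : Set Ω'} (hS : MeasurableSet S) (hpos : P S ≠ 0)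
    (hpos' : P Sᶜ ≠ 0) {f : Ω' → ℝ} (hf : Integrable f P) :
    ∫ x, f x ∂P = (P S).toReal * ∫ x, f x ∂P[|S] + (P Sᶜ).toReal * ∫ x, f x ∂P[|Sᶜ] := by
  rw [← setIntegral_eq_cond' hpos, ← setIntegral_eq_cond' hpos', integral_add_compl hS hf]

lemma measure_decomp_real' (S A : Set Ω') (hS : MeasurableSet S) :
    (P A).toReal = (P (A ∩ S)).toReal + (P (A ∩ Sᶜ)).toReal := by
  rw [← ENNReal.toReal_add (measure_ne_top _ _) (measure_ne_top _ _), ← Set.diff_eq,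
    measure_inter_add_diff A hS]

lemma cond_mul_eq' {S A B : Set Ω'} (hS : MeasurableSet S) (hpos : P S ≠ 0)
    (h : (P (S ∩ (A ∩ B))).toReal * (P S).toReal
      = (P (S ∩ A)).toReal * (P (S ∩ B)).toReal) :
    P[|S] (A ∩ B) = P[|S] A * P[|S] B := by
  have hfin : ∀ T : Set Ω', (P S)⁻¹ * P T ≠ ⊤ :=
    fun T => ENNReal.mul_ne_top (ENNReal.inv_ne_top.2 hpos) (measure_ne_top _ _)
  rw [cond_apply hS, cond_apply hS, cond_apply hS]
  apply (ENNReal.toReal_eq_toReal_iff' (hfin _) (ENNReal.mul_ne_top (hfin _) (hfin _))).mp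
  rw [ENNReal.toReal_mul, ENNReal.toReal_mul, ENNReal.toReal_mul, ENNReal.toReal_inv]
  have hs : (P S).toReal ≠ 0 := ENNReal.toReal_ne_zero.2 ⟨hpos, measure_ne_top _ _⟩
  rw [ENNReal.toReal_mul, ENNReal.toReal_inv]
  have hx : (P (S ∩ (A ∩ B))).toReal = (P (S ∩ A)).toReal * (P (S ∩ B)).toReal / (P S).toReal := by
    rw [eq_div_iff hs]; exact h
  rw [hx]; ring

lemma integrable_mul_of_memL2' {μ : Measure Ω'} {Y Z : Ω' → ℝ} (hY : MemLp Y 2 μ)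
    (hZ : MemLp Z 2 μ) : Integrable (fun ω => Y ω * Z ω) μ := by
  have h1 := (hY.add hZ).integrable_sq
  have h2 := hY.integrable_sq
  have h3 := hZ.integrable_sq
  have heq : (fun ω => Y ω * Z ω)
      = fun ω => ((Y ω + Z ω) ^ 2 - Y ω ^ 2 - Z ω ^ 2) / 2 := by funext ω; ring
  rw [heq]
  exact ((h1.sub h2).sub h3).div_const 2

end AuxMachinery2

section AuxMachinery3

set_option linter.unusedSectionVars false

lemma indepFun_cond' {Ω' : Type*} {mA mB : MeasurableSpace Ω'} [m0 : MeasurableSpace Ω']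
    {P : Measure Ω'} [IsProbabilityMeasure P]
    {S : Set Ω'} (hS : MeasurableSet S) (hpos : P S ≠ 0)
    (hstar : ∀ A B : Set Ω', MeasurableSet[mA] A → MeasurableSet[mB] B →
      (P (S ∩ (A ∩ B))).toReal * (P S).toReal
        = (P (S ∩ A)).toReal * (P (S ∩ B)).toReal)
    {Y Z : Ω' → ℝ} (hY : Measurable[mA] Y) (hZ : Measurable[mB] Z) :
    IndepFun Y Z P[|S] := by
  haveI : IsProbabilityMeasure (P[|S]) := cond_isProbabilityMeasure hpos
  rw [indepFun_iff_measure_inter_preimage_eq_mul]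
  intro s t hs ht
  exact cond_mul_eq' hS hpos (hstar _ _ (hY hs) (hZ ht))

end AuxMachinery3

section AuxAlgebra

variable {ε θ r : ℝ}

def pr (ε : ℝ) (i : Fin 2) : ℝ := if i = 0 then 1 - ε else ε

lemma pr_pos (hε0 : 0 < ε) (hε1 : ε ≤ 1 / 2) (i : Fin 2) : 0 < pr ε i := by
  fin_cases i <;> simp [pr] <;> linarith

lemma pr_nonneg (hε0 : 0 < ε) (hε1 : ε ≤ 1 / 2) (i : Fin 2) : 0 ≤ pr ε i :=
  (pr_pos hε0 hε1 i).le

lemma pmat_nonneg (hε0 : 0 < ε) (hε1 : ε ≤ 1 / 2) (hθ0 : 0 < θ) (hθ1 : θ ≤ 1)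
    (i j : Fin 2) : 0 ≤ pmat ε θ i j := by
  fin_cases i <;> fin_cases j <;> simp [pmat] <;> nlinarith

lemma pr_mul_pmat (i j : Fin 2) : pr ε i * pmat ε θ i j = lam ε θ i j := by
  fin_cases i <;> fin_cases j <;> simp [pr, pmat, lam] <;> ring

lemma lam_chapman (i j : Fin 2) :
    lam ε θ i 0 * pmat ε r 0 j + lam ε θ i 1 * pmat ε r 1 j = lam ε (θ * r) i j := by
  fin_cases i <;> fin_cases j <;> simp [pmat, lam] <;> ring

lemma pmat_diff (j : Fin 2) :
    pmat ε θ 0 j - pmat ε θ 1 j = (if j = 0 then θ else -θ) := by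
  fin_cases j <;> simp [pmat] <;> ring

lemma lam_sub_pr_mul (i j : Fin 2) :
    lam ε θ i j - pr ε i * pr ε j
      = (if i = 0 then 1 else -1) * (if j = 0 then 1 else -1) * ((1 - ε) * ε * θ) := by
  fin_cases i <;> fin_cases j <;> simp [pr, lam] <;> ring

end AuxAlgebra

section AuxSequence

set_option linter.unusedSectionVars false

variable {Ω : Type*} [m0 : MeasurableSpace Ω]

def St (X : ℤ → Ω → ℝ) (k : ℤ) (i : Fin 2) : Set Ω := X k ⁻¹' {((i : ℕ) : ℝ)}

lemma St_def (X : ℤ → Ω → ℝ) (k : ℤ) (i : Fin 2) :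
    St X k i = {ω | X k ω = ((i : ℕ) : ℝ)} := rfl

lemma measurableSet_St {X : ℤ → Ω → ℝ} (hmeas : ∀ k, Measurable (X k)) (k : ℤ) (i : Fin 2) :
    MeasurableSet (St X k i) := (hmeas k) (measurableSet_singleton _)

lemma St_comap (X : ℤ → Ω → ℝ) (k : ℤ) (i : Fin 2) :
    MeasurableSet[MeasurableSpace.comap (X k) inferInstance] (St X k i) :=
  ⟨{((i : ℕ) : ℝ)}, measurableSet_singleton _, rfl⟩

lemma compl_St0 {X : ℤ → Ω → ℝ} (hvals : ∀ k ω, X k ω = 0 ∨ X k ω = 1) (k : ℤ) :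
    (St X k 0)ᶜ = St X k 1 := by
  ext ω
  simp only [St, mem_compl_iff, mem_preimage, mem_singleton_iff, Fin.val_zero, Fin.val_one,
    Nat.cast_zero, Nat.cast_one]
  rcases hvals k ω with h | h <;> simp [h]

lemma St_union {X : ℤ → Ω → ℝ} (hvals : ∀ k ω, X k ω = 0 ∨ X k ω = 1) (k : ℤ) :
    St X k 0 ∪ St X k 1 = univ := by
  rw [← compl_St0 hvals k, union_compl_self]

lemma St_disjoint (X : ℤ → Ω → ℝ) (k : ℤ) : Disjoint (St X k 0) (St X k 1) := by
  rw [Set.disjoint_left]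
  intro ω h0 h1
  simp only [St, mem_preimage, mem_singleton_iff] at h0 h1
  rw [h0] at h1; norm_num at h1

lemma comap_le_past {X : ℤ → Ω → ℝ} {j k : ℤ} (hj : j ≤ k) :
    MeasurableSpace.comap (X j) inferInstance ≤ pastSigma X k :=
  le_iSup₂ (f := fun j (_ : j ≤ k) => MeasurableSpace.comap (X j) inferInstance) j hj

lemma comap_le_future {X : ℤ → Ω → ℝ} {j k : ℤ} (hj : k ≤ j) :
    MeasurableSpace.comap (X j) inferInstance ≤ futureSigma X k :=
  le_iSup₂ (f := fun j (_ : k ≤ j) => MeasurableSpace.comap (X j) inferInstance) j hj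

lemma past_le {X : ℤ → Ω → ℝ} (hmeas : ∀ k, Measurable (X k)) (k : ℤ) :
    pastSigma X k ≤ m0 :=
  iSup₂_le fun j _ => (hmeas j).comap_le

lemma future_le {X : ℤ → Ω → ℝ} (hmeas : ∀ k, Measurable (X k)) (k : ℤ) :
    futureSigma X k ≤ m0 :=
  iSup₂_le fun j _ => (hmeas j).comap_le

lemma future_mono {X : ℤ → Ω → ℝ} {k k' : ℤ} (h : k' ≤ k) :
    futureSigma X k ≤ futureSigma X k' :=
  iSup₂_le fun j hj => comap_le_future (h.trans hj)

lemma map_X_eq {P : Measure Ω} {X : ℤ → Ω → ℝ} (hstat : StrictlyStationary P X)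
    (hmeas : ∀ k, Measurable (X k)) (k : ℤ) :
    Measure.map (X k) P = Measure.map (X 0) P := by
  have h := hstat k
  have h0 : Measurable (fun s : ℤ → ℝ => s 0) := measurable_pi_apply 0
  have hshift : Measurable (fun ω (k' : ℤ) => X (k' + k) ω) :=
    measurable_pi_lambda _ fun k' => hmeas _
  have hseq : Measurable (fun ω (k' : ℤ) => X k' ω) :=
    measurable_pi_lambda _ fun k' => hmeas _
  have := congrArg (Measure.map (fun s : ℤ → ℝ => s 0)) h
  rwa [Measure.map_map h0 hshift, Measure.map_map h0 hseq,
    show ((fun s : ℤ → ℝ => s 0) ∘ fun ω (k' : ℤ) => X (k' + k) ω) = X k by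
      funext ω; simp,
    show ((fun s : ℤ → ℝ => s 0) ∘ fun ω (k' : ℤ) => X k' ω) = X 0 by funext ω; simp] at this

lemma marg {P : Measure Ω} {X : ℤ → Ω → ℝ} {ε : ℝ} (hstat : StrictlyStationary P X)
    (hmeas : ∀ k, Measurable (X k))
    (hP0 : P {ω | X 0 ω = 0} = ENNReal.ofReal (1 - ε))
    (hP1 : P {ω | X 0 ω = 1} = ENNReal.ofReal ε) (k : ℤ) (i : Fin 2) :
    P (St X k i) = ENNReal.ofReal (pr ε i) := by
  have : P (St X k i) = P (St X 0 i) := by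
    rw [St, St, ← Measure.map_apply (hmeas k) (measurableSet_singleton _),
      ← Measure.map_apply (hmeas 0) (measurableSet_singleton _), map_X_eq hstat hmeas k]
  rw [this]
  fin_cases i
  · simpa [St_def, pr] using hP0
  · simpa [St_def, pr] using hP1

lemma map_pair_eq {P : Measure Ω} {X : ℤ → Ω → ℝ} (hstat : StrictlyStationary P X)
    (hmeas : ∀ k, Measurable (X k)) (k : ℤ) :
    Measure.map (fun ω => (X k ω, X (k + 1) ω)) P
      = Measure.map (fun ω => (X 0 ω, X 1 ω)) P := by
  have h := hstat k
  have hG : Measurable (fun s : ℤ → ℝ => (s 0, s 1)) :=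
    (measurable_pi_apply 0).prodMk (measurable_pi_apply 1)
  have hshift : Measurable (fun ω (k' : ℤ) => X (k' + k) ω) :=
    measurable_pi_lambda _ fun k' => hmeas _
  have hseq : Measurable (fun ω (k' : ℤ) => X k' ω) :=
    measurable_pi_lambda _ fun k' => hmeas _
  have := congrArg (Measure.map (fun s : ℤ → ℝ => (s 0, s 1))) h
  rwa [Measure.map_map hG hshift, Measure.map_map hG hseq,
    show ((fun s : ℤ → ℝ => (s 0, s 1)) ∘ fun ω (k' : ℤ) => X (k' + k) ω)
        = fun ω => (X k ω, X (k + 1) ω) by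
      funext ω; simp [zero_add, add_comm],
    show ((fun s : ℤ → ℝ => (s 0, s 1)) ∘ fun ω (k' : ℤ) => X k' ω)
        = fun ω => (X 0 ω, X 1 ω) by funext ω; simp] at this

lemma pair_eq {P : Measure Ω} {X : ℤ → Ω → ℝ} (hstat : StrictlyStationary P X)
    (hmeas : ∀ k, Measurable (X k)) (k : ℤ) (i j : Fin 2) :
    P (St X k i ∩ St X (k + 1) j) = P (St X 0 i ∩ St X 1 j) := by
  have hpre : ∀ (a b : ℤ), St X a i ∩ St X b j
      = (fun ω => (X a ω, X b ω)) ⁻¹' ({((i : ℕ) : ℝ)} ×ˢ {((j : ℕ) : ℝ)}) := by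
    intro a b; ext ω
    simp [St, Set.mem_prod]
  have hms : MeasurableSet ({((i : ℕ) : ℝ)} ×ˢ {((j : ℕ) : ℝ)} : Set (ℝ × ℝ)) :=
    (measurableSet_singleton _).prod (measurableSet_singleton _)
  rw [hpre, hpre, ← Measure.map_apply ((hmeas k).prodMk (hmeas (k+1))) hms,
    ← Measure.map_apply ((hmeas 0).prodMk (hmeas 1)) hms, map_pair_eq hstat hmeas k]

end AuxSequence

section AuxChain

set_option linter.unusedSectionVars false

variable {Ω : Type*} [m0 : MeasurableSpace Ω] {P : Measure Ω} [IsProbabilityMeasure P]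
  {X : ℤ → Ω → ℝ} {ε r : ℝ}

lemma condS_marg (hmeas : ∀ k, Measurable (X k)) (hS : ConditionS P X ε r) (k : ℤ) (i : Fin 2) :
    P (St X k i) = ENNReal.ofReal (pr ε i) :=
  marg hS.1 hmeas hS.2.2.2.1 hS.2.2.2.2.1 k i

lemma condS_pos (hmeas : ∀ k, Measurable (X k)) (hS : ConditionS P X ε r)
    (hε : ε ∈ Set.Ioc (0:ℝ) (1/2)) (k : ℤ) (i : Fin 2) : P (St X k i) ≠ 0 := by
  rw [condS_marg hmeas hS]
  exact fun h => absurd (ENNReal.ofReal_eq_zero.mp h) (not_le.2 (pr_pos hε.1 hε.2 i))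

lemma condS_toReal (hmeas : ∀ k, Measurable (X k)) (hS : ConditionS P X ε r)
    (hε : ε ∈ Set.Ioc (0:ℝ) (1/2)) (k : ℤ) (i : Fin 2) :
    (P (St X k i)).toReal = pr ε i := by
  rw [condS_marg hmeas hS]
  exact ENNReal.toReal_ofReal (pr_nonneg hε.1 hε.2 i)

lemma star_X (hmeas : ∀ k, Measurable (X k)) (hS : ConditionS P X ε r)
    (hε : ε ∈ Set.Ioc (0:ℝ) (1/2)) (k : ℤ) (i : Fin 2) {A B : Set Ω}
    (hA : MeasurableSet[pastSigma X k] A) (hB : MeasurableSet[futureSigma X k] B) :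
    (P (St X k i ∩ (A ∩ B))).toReal * (P (St X k i)).toReal
      = (P (St X k i ∩ A)).toReal * (P (St X k i ∩ B)).toReal :=
  star_lemma (hmeas k) _ (condS_pos hmeas hS hε k i) (past_le hmeas k _ hA)
    (future_le hmeas k _ hB) (hS.2.1 k A B hA hB)

lemma indepFun_X (hmeas : ∀ k, Measurable (X k)) (hS : ConditionS P X ε r)
    (hε : ε ∈ Set.Ioc (0:ℝ) (1/2)) (k : ℤ) (i : Fin 2) {Y Z : Ω → ℝ}
    (hY : Measurable[pastSigma X k] Y) (hZ : Measurable[futureSigma X k] Z) :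
    IndepFun Y Z P[|St X k i] :=
  indepFun_cond' (measurableSet_St hmeas k i) (condS_pos hmeas hS hε k i)
    (fun A B hA hB => star_X hmeas hS hε k i hA hB) hY hZ

lemma setIntegral_indep (hmeas : ∀ k, Measurable (X k)) (hS : ConditionS P X ε r)
    (hε : ε ∈ Set.Ioc (0:ℝ) (1/2)) (k : ℤ) (i : Fin 2) {A : Set Ω}
    (hA : MeasurableSet[pastSigma X k] A) {Z : Ω → ℝ}
    (hZ : Measurable[futureSigma X k] Z) (hZi : Integrable Z P) :
    ∫ ω in A ∩ St X k i, Z ω ∂P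
      = (P (St X k i ∩ A)).toReal * ∫ ω, Z ω ∂P[|St X k i] := by
  have hS' : MeasurableSet (St X k i) := measurableSet_St hmeas k i
  have hpos : P (St X k i) ≠ 0 := condS_pos hmeas hS hε k i
  have hA' : MeasurableSet A := past_le hmeas k _ hA
  have hIF : IndepFun (A.indicator fun _ => (1:ℝ)) Z P[|St X k i] :=
    indepFun_X hmeas hS hε k i (measurable_const.indicator hA) hZ
  have h1 := hIF.integral_mul_eq_mul_integral
    (integrable_cond' hpos ((integrable_const (1:ℝ)).indicator hA')).aestronglyMeasurable
    (integrable_cond' hpos hZi).aestronglyMeasurable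
  have h2 : ((A.indicator fun _ => (1:ℝ)) * Z) = A.indicator Z := by
    funext ω; by_cases h : ω ∈ A <;> simp [h]
  rw [h2] at h1
  rw [integral_indicator hA'] at h1
  have h4 : ∫ ω, A.indicator (fun _ => (1:ℝ)) ω ∂(P[|St X k i])
      = (P[|St X k i] A).toReal := by
    rw [integral_indicator_const (1:ℝ) hA', smul_eq_mul, mul_one, measureReal_def]
  rw [h4] at h1
  have h5 : ∫ ω in A, Z ω ∂(P[|St X k i])
      = ((P (St X k i))⁻¹).toReal * ∫ ω in A ∩ St X k i, Z ω ∂P := by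
    rw [ProbabilityTheory.cond, Measure.restrict_smul, integral_smul_measure, smul_eq_mul,
      Measure.restrict_restrict hA']
  rw [h5, cond_toReal' hS', ENNReal.toReal_inv] at h1
  have hs : (P (St X k i)).toReal ≠ 0 :=
    ENNReal.toReal_ne_zero.2 ⟨hpos, measure_ne_top _ _⟩
  calc ∫ ω in A ∩ St X k i, Z ω ∂P
      = (P (St X k i)).toReal * ((P (St X k i)).toReal⁻¹ * ∫ ω in A ∩ St X k i, Z ω ∂P) :=
        (mul_inv_cancel_left₀ hs _).symm
    _ = (P (St X k i)).toReal * ((P (St X k i ∩ A)).toReal / (P (St X k i)).toReal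
          * ∫ ω, Z ω ∂P[|St X k i]) := by rw [h1]
    _ = (P (St X k i ∩ A)).toReal * ∫ ω, Z ω ∂P[|St X k i] := by
        field_simp

lemma joint_one (hmeas : ∀ k, Measurable (X k)) (hS : ConditionS P X ε r)
    (hε : ε ∈ Set.Ioc (0:ℝ) (1/2)) (hr : r ∈ Set.Ioo (0:ℝ) 1) (i j : Fin 2) :
    (P (St X 0 i ∩ St X 1 j)).toReal = lam ε r i j := by
  have hc := hS.2.2.2.2.2 i j
  rw [show {ω | X 0 ω = ((i:ℕ):ℝ)} = St X 0 i from rfl,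
    show {ω | X 1 ω = ((j:ℕ):ℝ)} = St X 1 j from rfl] at hc
  rw [cond_apply (measurableSet_St hmeas 0 i)] at hc
  have hpos := condS_pos hmeas hS hε 0 i
  have hPP : P (St X 0 i ∩ St X 1 j) = P (St X 0 i) * ENNReal.ofReal (pmat ε r i j) := by
    rw [← hc, ← mul_assoc, ENNReal.mul_inv_cancel hpos (measure_ne_top _ _), one_mul]
  rw [hPP, ENNReal.toReal_mul, condS_toReal hmeas hS hε 0 i,
    ENNReal.toReal_ofReal (pmat_nonneg hε.1 hε.2 hr.1 hr.2.le i j), pr_mul_pmat]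

lemma joint (hmeas : ∀ k, Measurable (X k)) (hS : ConditionS P X ε r)
    (hε : ε ∈ Set.Ioc (0:ℝ) (1/2)) (hr : r ∈ Set.Ioo (0:ℝ) 1) (n : ℕ) (hn : 1 ≤ n)
    (i : Fin 2) : ∀ j : Fin 2,
    (P (St X 0 i ∩ St X (n:ℤ) j)).toReal = lam ε (r ^ n) i j := by
  induction n, hn using Nat.le_induction with
  | base =>
    intro j
    simpa [pow_one] using joint_one hmeas hS hε hr i j
  | succ n hn ih =>
    intro j
    have hcast : ((n + 1 : ℕ) : ℤ) = (n : ℤ) + 1 := by push_cast; ring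
    rw [hcast]
    have hd := measure_decomp_real' (P := P) (St X (n:ℤ) 0)
      (St X 0 i ∩ St X ((n:ℤ)+1) j) (measurableSet_St hmeas _ 0)
    rw [compl_St0 hS.2.2.1] at hd
    have h0n : (0:ℤ) ≤ (n:ℤ) := by exact_mod_cast Nat.zero_le n
    have key : ∀ t : Fin 2,
        (P ((St X 0 i ∩ St X ((n:ℤ)+1) j) ∩ St X (n:ℤ) t)).toReal
          = lam ε (r^n) i t * pmat ε r t j := by
      intro t
      have hA : MeasurableSet[pastSigma X (n:ℤ)] (St X 0 i) :=
        comap_le_past h0n _ (St_comap X 0 i)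
      have hB : MeasurableSet[futureSigma X (n:ℤ)] (St X ((n:ℤ)+1) j) :=
        comap_le_future (by linarith) _ (St_comap X _ j)
      have hstar := star_X hmeas hS hε (n:ℤ) t hA hB
      rw [condS_toReal hmeas hS hε (n:ℤ) t] at hstar
      have e1 : (P (St X (n:ℤ) t ∩ St X 0 i)).toReal = lam ε (r^n) i t := by
        rw [Set.inter_comm]; exact ih t
      have e2 : (P (St X (n:ℤ) t ∩ St X ((n:ℤ)+1) j)).toReal = lam ε r t j := by
        rw [pair_eq hS.1 hmeas (n:ℤ) t j]; exact joint_one hmeas hS hε hr t j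
      rw [e1, e2] at hstar
      have hprt := pr_pos hε.1 hε.2 t
      rw [Set.inter_comm]
      have h2 : (P (St X (n:ℤ) t ∩ (St X 0 i ∩ St X ((n:ℤ)+1) j))).toReal * pr ε t
          = (lam ε (r^n) i t * pmat ε r t j) * pr ε t := by
        rw [hstar, ← pr_mul_pmat (θ := r) (ε := ε) t j]; ring
      exact mul_right_cancel₀ hprt.ne' h2
    rw [hd, key 0, key 1, lam_chapman, ← pow_succ]

lemma cond_step (hmeas : ∀ k, Measurable (X k)) (hS : ConditionS P X ε r)
    (hε : ε ∈ Set.Ioc (0:ℝ) (1/2)) (hr : r ∈ Set.Ioo (0:ℝ) 1) (n : ℕ) (hn : 1 ≤ n)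
    (i j : Fin 2) :
    P[|St X 0 i] (St X (n:ℤ) j) = ENNReal.ofReal (pmat ε (r ^ n) i j) := by
  have hθ0 : (0:ℝ) < r ^ n := pow_pos hr.1 n
  have hθ1 : r ^ n ≤ 1 := pow_le_one₀ hr.1.le hr.2.le
  rw [cond_apply (measurableSet_St hmeas 0 i)]
  have hPst : P (St X 0 i ∩ St X (n:ℤ) j) = ENNReal.ofReal (lam ε (r^n) i j) := by
    rw [← ENNReal.ofReal_toReal (measure_ne_top P _), joint hmeas hS hε hr n hn i j]
  have hne : ENNReal.ofReal (pr ε i) ≠ 0 := by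
    rw [← condS_marg hmeas hS]; exact condS_pos hmeas hS hε 0 i
  rw [hPst, condS_marg hmeas hS, ← pr_mul_pmat,
    ENNReal.ofReal_mul (pr_nonneg hε.1 hε.2 i), ← mul_assoc,
    ENNReal.inv_mul_cancel hne ENNReal.ofReal_ne_top, one_mul]

lemma future_z (hmeas : ∀ k, Measurable (X k)) (hS : ConditionS P X ε r)
    (hε : ε ∈ Set.Ioc (0:ℝ) (1/2)) (hr : r ∈ Set.Ioo (0:ℝ) 1) (n : ℕ) (hn : 1 ≤ n)
    {Z : Ω → ℝ} (hZm : Measurable[futureSigma X (n:ℤ)] Z) (hZi : Integrable Z P)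
    (i : Fin 2) :
    ∫ ω, Z ω ∂P[|St X 0 i]
      = pmat ε (r^n) i 0 * (∫ ω, Z ω ∂P[|St X (n:ℤ) 0])
        + pmat ε (r^n) i 1 * (∫ ω, Z ω ∂P[|St X (n:ℤ) 1]) := by
  have h0n : (0:ℤ) ≤ (n:ℤ) := by exact_mod_cast Nat.zero_le n
  have hsplit : ∫ ω in St X 0 i, Z ω ∂P
      = (∫ ω in St X 0 i ∩ St X (n:ℤ) 0, Z ω ∂P)
        + ∫ ω in St X 0 i ∩ St X (n:ℤ) 1, Z ω ∂P := by
    have h := integral_inter_add_diff (μ := P) (s := St X 0 i) (t := St X (n:ℤ) 0)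
      (measurableSet_St hmeas _ 0) hZi.integrableOn
    rw [Set.diff_eq, compl_St0 hS.2.2.1] at h
    linarith
  have hterm : ∀ t : Fin 2, ∫ ω in St X 0 i ∩ St X (n:ℤ) t, Z ω ∂P
      = lam ε (r^n) i t * ∫ ω, Z ω ∂P[|St X (n:ℤ) t] := by
    intro t
    rw [setIntegral_indep hmeas hS hε (n:ℤ) t (comap_le_past h0n _ (St_comap X 0 i)) hZm hZi,
      Set.inter_comm, joint hmeas hS hε hr n hn i t]
  have hfin := setIntegral_eq_cond' (condS_pos hmeas hS hε 0 i) Z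
  rw [condS_toReal hmeas hS hε 0 i] at hfin
  have hpr := pr_pos hε.1 hε.2 i
  have h2 : pr ε i * (∫ ω, Z ω ∂P[|St X 0 i])
      = pr ε i * (pmat ε (r^n) i 0 * (∫ ω, Z ω ∂P[|St X (n:ℤ) 0])
        + pmat ε (r^n) i 1 * (∫ ω, Z ω ∂P[|St X (n:ℤ) 1])) := by
    have e := hsplit
    rw [hterm 0, hterm 1, hfin, ← pr_mul_pmat (θ := r^n) (ε := ε) i 0,
      ← pr_mul_pmat (θ := r^n) (ε := ε) i 1] at e
    linear_combination e
  exact mul_left_cancel₀ hpr.ne' h2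

lemma future_z_diff (hmeas : ∀ k, Measurable (X k)) (hS : ConditionS P X ε r)
    (hε : ε ∈ Set.Ioc (0:ℝ) (1/2)) (hr : r ∈ Set.Ioo (0:ℝ) 1) (n : ℕ) (hn : 1 ≤ n)
    {Z : Ω → ℝ} (hZm : Measurable[futureSigma X (n:ℤ)] Z) (hZi : Integrable Z P) :
    (∫ ω, Z ω ∂P[|St X 0 0]) - (∫ ω, Z ω ∂P[|St X 0 1])
      = r^n * ((∫ ω, Z ω ∂P[|St X (n:ℤ) 0]) - ∫ ω, Z ω ∂P[|St X (n:ℤ) 1]) := by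
  rw [future_z hmeas hS hε hr n hn hZm hZi 0, future_z hmeas hS hε hr n hn hZm hZi 1]
  have d0 : pmat ε (r^n) 0 0 - pmat ε (r^n) 1 0 = r^n := by simp [pmat]; ring
  have d1 : pmat ε (r^n) 0 1 - pmat ε (r^n) 1 1 = -(r^n) := by simp [pmat]; ring
  linear_combination (∫ ω, Z ω ∂P[|St X (n:ℤ) 0]) * d0 + (∫ ω, Z ω ∂P[|St X (n:ℤ) 1]) * d1

end AuxChain

section AuxEvents

set_option linter.unusedSectionVars false

variable {Ω : Type*} [m0 : MeasurableSpace Ω] {P : Measure Ω} [IsProbabilityMeasure P]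
  {X : ℤ → Ω → ℝ} {ε r : ℝ}

lemma cond_prob_nonneg {S A : Set Ω} : 0 ≤ (P[|S] A).toReal := ENNReal.toReal_nonneg

lemma cond_prob_le_one {S A : Set Ω} (hS : MeasurableSet S) (hpos : P S ≠ 0) :
    (P[|S] A).toReal ≤ 1 := by
  haveI : IsProbabilityMeasure (P[|S]) := cond_isProbabilityMeasure hpos
  exact ENNReal.toReal_le_of_le_ofReal one_pos.le (by simpa using prob_le_one)

lemma cond_indicator_integral {S C : Set Ω} (hC : MeasurableSet C) :
    ∫ ω, C.indicator (fun _ => (1:ℝ)) ω ∂(P[|S]) = (P[|S] C).toReal := by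
  rw [integral_indicator_const (1:ℝ) hC, smul_eq_mul, mul_one, measureReal_def]

/-- The master formula: for a past event `A` and future event `B`,
`P(A∩B) - P(A)P(B) = (1-ε)ε rⁿ (a₀ - a₁)(w₀ - w₁)`. -/
lemma event_formula (hmeas : ∀ k, Measurable (X k)) (hS : ConditionS P X ε r)
    (hε : ε ∈ Set.Ioc (0:ℝ) (1/2)) (hr : r ∈ Set.Ioo (0:ℝ) 1) (n : ℕ) (hn : 1 ≤ n)
    {A B : Set Ω} (hA : MeasurableSet[pastSigma X 0] A)
    (hB : MeasurableSet[futureSigma X (n:ℤ)] B) :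
    (P (A ∩ B)).toReal - (P A).toReal * (P B).toReal
      = (1-ε) * ε * r^n
        * ((P[|St X 0 0] A).toReal - (P[|St X 0 1] A).toReal)
        * ((P[|St X (n:ℤ) 0] B).toReal - (P[|St X (n:ℤ) 1] B).toReal) := by
  have h0n : (0:ℤ) ≤ (n:ℤ) := by exact_mod_cast Nat.zero_le n
  have hvals := hS.2.2.1
  have hA' : MeasurableSet A := past_le hmeas 0 _ hA
  have hB' : MeasurableSet B := future_le hmeas (n:ℤ) _ hB
  have hB0 : MeasurableSet[futureSigma X 0] B := future_mono h0n _ hB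
  have hprt : ∀ t : Fin 2, 0 < pr ε t := pr_pos hε.1 hε.2
  -- conditional probabilities as ratios
  have hcr : ∀ (k : ℤ) (t : Fin 2) (C : Set Ω),
      (P[|St X k t] C).toReal = (P (St X k t ∩ C)).toReal / pr ε t := by
    intro k t C
    rw [cond_toReal' (measurableSet_St hmeas k t), condS_toReal hmeas hS hε k t]
  -- decomposition of P(A∩B)
  have hterm : ∀ t : Fin 2, (P ((A ∩ B) ∩ St X 0 t)).toReal
      = pr ε t * ((P[|St X 0 t] A).toReal * (P[|St X 0 t] B).toReal) := by
    intro t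
    have hstar := star_X hmeas hS hε 0 t hA hB0
    rw [condS_toReal hmeas hS hε 0 t] at hstar
    have hne : pr ε t ≠ 0 := (hprt t).ne'
    rw [Set.inter_comm, hcr, hcr]
    field_simp
    linear_combination hstar
  have hAB : (P (A ∩ B)).toReal
      = pr ε 0 * ((P[|St X 0 0] A).toReal * (P[|St X 0 0] B).toReal)
        + pr ε 1 * ((P[|St X 0 1] A).toReal * (P[|St X 0 1] B).toReal) := by
    rw [measure_decomp_real' (P := P) (St X 0 0) (A ∩ B) (measurableSet_St hmeas 0 0),
      compl_St0 hvals 0, hterm 0, hterm 1]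
  -- decomposition of single events at time k
  have hsingle : ∀ (k : ℤ) (C : Set Ω), MeasurableSet C → (P C).toReal
      = pr ε 0 * (P[|St X k 0] C).toReal + pr ε 1 * (P[|St X k 1] C).toReal := by
    intro k C hC
    rw [measure_decomp_real' (P := P) (St X k 0) C (measurableSet_St hmeas k 0),
      compl_St0 hvals k, hcr, hcr, Set.inter_comm (St X k 0), Set.inter_comm (St X k 1)]
    rw [mul_comm (pr ε 0), mul_comm (pr ε 1), div_mul_cancel₀ _ (hprt 0).ne',
      div_mul_cancel₀ _ (hprt 1).ne']
  -- transfer of B-conditionals from time 0 to time n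
  have hbw : (P[|St X 0 0] B).toReal - (P[|St X 0 1] B).toReal
      = r^n * ((P[|St X (n:ℤ) 0] B).toReal - (P[|St X (n:ℤ) 1] B).toReal) := by
    have hZm : Measurable[futureSigma X (n:ℤ)] (B.indicator fun _ => (1:ℝ)) :=
      measurable_const.indicator hB
    have hZi : Integrable (B.indicator fun _ => (1:ℝ)) P :=
      (integrable_const 1).indicator hB'
    have hd := future_z_diff hmeas hS hε hr n hn hZm hZi
    rwa [cond_indicator_integral hB', cond_indicator_integral hB',
      cond_indicator_integral hB', cond_indicator_integral hB'] at hd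
  have hPA := hsingle 0 A hA'
  have hPB := hsingle 0 B hB'
  have hpr0 : pr ε 0 = 1 - ε := rfl
  have hpr1 : pr ε 1 = ε := rfl
  rw [hAB, hPA, hPB, hpr0, hpr1] at *
  rw [show (P[|St X 0 0] B).toReal
      = (P[|St X 0 1] B).toReal
        + r^n * ((P[|St X (n:ℤ) 0] B).toReal - (P[|St X (n:ℤ) 1] B).toReal) by
    linarith [hbw]]
  ring

end AuxEvents

section AuxAlphaBeta

set_option linter.unusedSectionVars false

variable {Ω : Type*} [m0 : MeasurableSpace Ω] {P : Measure Ω} [IsProbabilityMeasure P]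
  {X : ℤ → Ω → ℝ} {ε r : ℝ}

lemma St_pairwise (X : ℤ → Ω → ℝ) (k : ℤ) :
    Pairwise (Function.onFun Disjoint (fun i : Fin 2 => St X k i)) := by
  intro i j hij
  fin_cases i <;> fin_cases j <;>
    first
      | exact absurd rfl hij
      | exact St_disjoint X k
      | exact (St_disjoint X k).symm

lemma St_iUnion {X : ℤ → Ω → ℝ} (hvals : ∀ k ω, X k ω = 0 ∨ X k ω = 1) (k : ℤ) :
    (⋃ i : Fin 2, St X k i) = univ := by
  rw [show (⋃ i : Fin 2, St X k i) = St X k 0 ∪ St X k 1 by ext ω; simp [Fin.exists_fin_two]]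
  exact St_union hvals k

lemma abs_term_eq (hmeas : ∀ k, Measurable (X k)) (hS : ConditionS P X ε r)
    (hε : ε ∈ Set.Ioc (0:ℝ) (1/2)) (hr : r ∈ Set.Ioo (0:ℝ) 1) (n : ℕ) (hn : 1 ≤ n)
    (i j : Fin 2) :
    |(P (St X 0 i ∩ St X (n:ℤ) j)).toReal
      - (P (St X 0 i)).toReal * (P (St X (n:ℤ) j)).toReal| = (1-ε)*ε*r^n := by
  have hc : (0:ℝ) ≤ (1-ε)*ε*r^n :=
    mul_nonneg (mul_nonneg (by linarith [hε.2]) hε.1.le) (pow_pos hr.1 n).le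
  rw [joint hmeas hS hε hr n hn i j, condS_toReal hmeas hS hε 0 i,
    condS_toReal hmeas hS hε (n:ℤ) j, lam_sub_pr_mul i j]
  fin_cases i <;> fin_cases j <;>
    norm_num [abs_mul, abs_of_nonneg hc]

set_option maxHeartbeats 2000000 in
lemma alphaX_eq (hmeas : ∀ k, Measurable (X k)) (hS : ConditionS P X ε r)
    (hε : ε ∈ Set.Ioc (0:ℝ) (1/2)) (hr : r ∈ Set.Ioo (0:ℝ) 1) (n : ℕ) (hn : 1 ≤ n) :
    alphaX P X n = (1-ε)*ε*r^n := by
  have h0n : (0:ℤ) ≤ (n:ℤ) := by exact_mod_cast Nat.zero_le n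
  have hc : (0:ℝ) ≤ (1-ε)*ε*r^n :=
    mul_nonneg (mul_nonneg (by linarith [hε.2]) hε.1.le) (pow_pos hr.1 n).le
  apply IsGreatest.csSup_eq
  constructor
  · exact ⟨St X 0 1, St X (n:ℤ) 1, comap_le_past le_rfl _ (St_comap X 0 1),
      comap_le_future le_rfl _ (St_comap X (n:ℤ) 1),
      (abs_term_eq hmeas hS hε hr n hn 1 1).symm⟩
  · rintro x ⟨A, B, hA, hB, rfl⟩
    rw [event_formula hmeas hS hε hr n hn hA hB]
    have hbndA : |(P[|St X 0 0] A).toReal - (P[|St X 0 1] A).toReal| ≤ 1 := by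
      rw [abs_le]
      constructor <;>
        nlinarith [cond_prob_nonneg (P := P) (S := St X 0 0) (A := A),
          cond_prob_nonneg (P := P) (S := St X 0 1) (A := A),
          cond_prob_le_one (P := P) (A := A) (measurableSet_St hmeas 0 0)
            (condS_pos hmeas hS hε 0 0),
          cond_prob_le_one (P := P) (A := A) (measurableSet_St hmeas 0 1)
            (condS_pos hmeas hS hε 0 1)]
    have hbndB : |(P[|St X (n:ℤ) 0] B).toReal - (P[|St X (n:ℤ) 1] B).toReal| ≤ 1 := by
      rw [abs_le]
      constructor <;>
        nlinarith [cond_prob_nonneg (P := P) (S := St X (n:ℤ) 0) (A := B),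
          cond_prob_nonneg (P := P) (S := St X (n:ℤ) 1) (A := B),
          cond_prob_le_one (P := P) (A := B) (measurableSet_St hmeas (n:ℤ) 0)
            (condS_pos hmeas hS hε (n:ℤ) 0),
          cond_prob_le_one (P := P) (A := B) (measurableSet_St hmeas (n:ℤ) 1)
            (condS_pos hmeas hS hε (n:ℤ) 1)]
    rw [abs_mul, abs_mul, abs_of_nonneg hc]
    exact le_trans (mul_le_of_le_one_right (mul_nonneg hc (abs_nonneg _)) hbndB)
      (mul_le_of_le_one_right hc hbndA)

set_option maxHeartbeats 2000000 in
lemma betaX_eq (hmeas : ∀ k, Measurable (X k)) (hS : ConditionS P X ε r)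
    (hε : ε ∈ Set.Ioc (0:ℝ) (1/2)) (hr : r ∈ Set.Ioo (0:ℝ) 1) (n : ℕ) (hn : 1 ≤ n) :
    betaX P X n = 2*((1-ε)*ε*r^n) := by
  have h0n : (0:ℤ) ≤ (n:ℤ) := by exact_mod_cast Nat.zero_le n
  have hc : (0:ℝ) ≤ (1-ε)*ε*r^n :=
    mul_nonneg (mul_nonneg (by linarith [hε.2]) hε.1.le) (pow_pos hr.1 n).le
  apply IsGreatest.csSup_eq
  constructor
  · refine ⟨2, 2, fun i => St X 0 i, fun j => St X (n:ℤ) j,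
      ⟨fun i => comap_le_past le_rfl _ (St_comap X 0 i), St_pairwise X 0,
        St_iUnion hS.2.2.1 0⟩,
      ⟨fun j => comap_le_future le_rfl _ (St_comap X (n:ℤ) j), St_pairwise X (n:ℤ),
        St_iUnion hS.2.2.1 (n:ℤ)⟩, ?_⟩
    simp only [Fin.sum_univ_two, abs_term_eq hmeas hS hε hr n hn]
    ring
  · rintro x ⟨m, nn, A, B, ⟨hAm, hAd, hAu⟩, ⟨hBm, hBd, hBu⟩, rfl⟩
    have hterm : ∀ i j, |(P (A i ∩ B j)).toReal - (P (A i)).toReal * (P (B j)).toReal|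
        = ((1-ε)*ε*r^n) * (|(P[|St X 0 0] (A i)).toReal - (P[|St X 0 1] (A i)).toReal|
          * |(P[|St X (n:ℤ) 0] (B j)).toReal - (P[|St X (n:ℤ) 1] (B j)).toReal|) := by
      intro i j
      rw [event_formula hmeas hS hε hr n hn (hAm i) (hBm j), abs_mul, abs_mul,
        abs_of_nonneg hc, mul_assoc]
    -- sums of conditional probabilities over a partition equal 1
    have hsum : ∀ (k : ℤ) (t : Fin 2) (mm : ℕ) (C : Fin mm → Set Ω),
        (∀ i, MeasurableSet (C i)) → Pairwise (Function.onFun Disjoint C) →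
        (⋃ i, C i) = univ →
        ∑ i, (P[|St X k t] (C i)).toReal = 1 := by
      intro k t mm C hCm hCd hCu
      haveI : IsProbabilityMeasure (P[|St X k t]) :=
        cond_isProbabilityMeasure (condS_pos hmeas hS hε k t)
      have h1 : P[|St X k t] (⋃ i, C i) = ∑' i, P[|St X k t] (C i) :=
        measure_iUnion hCd hCm
      rw [hCu, measure_univ, tsum_fintype] at h1
      rw [← ENNReal.toReal_sum (fun i _ => measure_ne_top _ _), ← h1, ENNReal.toReal_one]
    have habssum : ∀ (k : ℤ) (mm : ℕ) (C : Fin mm → Set Ω),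
        (∀ i, MeasurableSet (C i)) → Pairwise (Function.onFun Disjoint C) →
        (⋃ i, C i) = univ →
        ∑ i, |(P[|St X k 0] (C i)).toReal - (P[|St X k 1] (C i)).toReal| ≤ 2 := by
      intro k mm C hCm hCd hCu
      have hb : ∀ i, |(P[|St X k 0] (C i)).toReal - (P[|St X k 1] (C i)).toReal|
          ≤ (P[|St X k 0] (C i)).toReal + (P[|St X k 1] (C i)).toReal := by
        intro i
        rw [abs_le]
        constructor <;>
          nlinarith [cond_prob_nonneg (P := P) (S := St X k 0) (A := C i),
            cond_prob_nonneg (P := P) (S := St X k 1) (A := C i)]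
      calc ∑ i, |(P[|St X k 0] (C i)).toReal - (P[|St X k 1] (C i)).toReal|
          ≤ ∑ i, ((P[|St X k 0] (C i)).toReal + (P[|St X k 1] (C i)).toReal) :=
            Finset.sum_le_sum (fun i _ => hb i)
        _ = (∑ i, (P[|St X k 0] (C i)).toReal) + ∑ i, (P[|St X k 1] (C i)).toReal :=
            Finset.sum_add_distrib
        _ = 2 := by rw [hsum k 0 mm C hCm hCd hCu, hsum k 1 mm C hCm hCd hCu]; norm_num
    have hA2 := habssum 0 m A (fun i => past_le hmeas 0 _ (hAm i)) hAd hAu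
    have hB2 := habssum (n:ℤ) nn B (fun j => future_le hmeas (n:ℤ) _ (hBm j)) hBd hBu
    have hsum2 : ∑ i, ∑ j, |(P (A i ∩ B j)).toReal - (P (A i)).toReal * (P (B j)).toReal|
        = ((1-ε)*ε*r^n)
          * ((∑ i, |(P[|St X 0 0] (A i)).toReal - (P[|St X 0 1] (A i)).toReal|)
            * ∑ j, |(P[|St X (n:ℤ) 0] (B j)).toReal - (P[|St X (n:ℤ) 1] (B j)).toReal|) := by
      rw [Finset.sum_mul_sum, Finset.mul_sum]
      refine Finset.sum_congr rfl fun i _ => ?_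
      rw [Finset.mul_sum]
      exact Finset.sum_congr rfl fun j _ => hterm i j
    rw [hsum2]
    have hsA : 0 ≤ ∑ i, |(P[|St X 0 0] (A i)).toReal - (P[|St X 0 1] (A i)).toReal| :=
      Finset.sum_nonneg (fun i _ => abs_nonneg _)
    have hsB : 0 ≤ ∑ j, |(P[|St X (n:ℤ) 0] (B j)).toReal - (P[|St X (n:ℤ) 1] (B j)).toReal| :=
      Finset.sum_nonneg (fun j _ => abs_nonneg _)
    have h4 : (∑ i, |(P[|St X 0 0] (A i)).toReal - (P[|St X 0 1] (A i)).toReal|)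
        * (∑ j, |(P[|St X (n:ℤ) 0] (B j)).toReal - (P[|St X (n:ℤ) 1] (B j)).toReal|)
        ≤ 4 := by nlinarith
    have h5 := mul_le_mul_of_nonneg_left h4 hc
    linarith

end AuxAlphaBeta

section AuxRho

set_option linter.unusedSectionVars false

variable {Ω : Type*} [m0 : MeasurableSpace Ω] {P : Measure Ω} [IsProbabilityMeasure P]
  {X : ℤ → Ω → ℝ} {ε r : ℝ}

lemma cov_eq {Y Z : Ω → ℝ} (hY : Integrable Y P) (hZ : Integrable Z P)
    (hYZ : Integrable (fun ω => Y ω * Z ω) P) :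
    cov P Y Z = (∫ ω, Y ω * Z ω ∂P) - (∫ ω, Y ω ∂P) * ∫ ω, Z ω ∂P := by
  set a := ∫ ω, Y ω ∂P with ha
  set b := ∫ ω, Z ω ∂P with hb
  have hexp : (fun ω => (Y ω - a) * (Z ω - b))
      = fun ω => (Y ω * Z ω - a * Z ω) - (b * Y ω - a * b) := by
    funext ω; ring
  have i2 : Integrable (fun ω => a * Z ω) P := hZ.const_mul a
  have i3 : Integrable (fun ω => b * Y ω) P := hY.const_mul b
  have i4 : Integrable (fun _ : Ω => a * b) P := integrable_const (a*b)
  have i1 : Integrable (fun ω => Y ω * Z ω - a * Z ω) P := hYZ.sub i2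
  have i5 : Integrable (fun ω => b * Y ω - a * b) P := i3.sub i4
  rw [cov, ← ha, ← hb, hexp, integral_sub i1 i5, integral_sub hYZ i2, integral_sub i3 i4,
    integral_const_mul, integral_const_mul, integral_const]
  simp [measure_univ]
  ring

/-- Variance lower bound through conditioning on the time-`k` atoms. -/
lemma variance_lower (hmeas : ∀ k, Measurable (X k)) (hS : ConditionS P X ε r)
    (hε : ε ∈ Set.Ioc (0:ℝ) (1/2)) (k : ℤ) {Z : Ω → ℝ} (hZ2 : MemLp Z 2 P) :
    (1-ε) * ε * ((∫ ω, Z ω ∂P[|St X k 0]) - ∫ ω, Z ω ∂P[|St X k 1])^2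
      ≤ variance Z P := by
  have hvals := hS.2.2.1
  have hpos0 := condS_pos hmeas hS hε k 0
  have hpos1 := condS_pos hmeas hS hε k 1
  have hZi : Integrable Z P := hZ2.integrable one_le_two
  have hZsq : Integrable (fun ω => Z ω ^ 2) P := hZ2.integrable_sq
  haveI hPc0 : IsProbabilityMeasure (P[|St X k 0]) := cond_isProbabilityMeasure hpos0
  haveI hPc1 : IsProbabilityMeasure (P[|St X k 1]) := cond_isProbabilityMeasure hpos1
  have hvar := variance_eq_sub (μ := P) hZ2
  have hd1 : ∫ ω, Z ω ∂P = (1-ε) * (∫ ω, Z ω ∂P[|St X k 0])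
      + ε * ∫ ω, Z ω ∂P[|St X k 1] := by
    have h := integral_decomp' (measurableSet_St hmeas k 0) hpos0
      (by rwa [compl_St0 hvals k]) hZi
    rwa [compl_St0 hvals k, condS_toReal hmeas hS hε k 0,
      show (P (St X k 1)).toReal = ε from condS_toReal hmeas hS hε k 1,
      show pr ε 0 = 1 - ε from rfl] at h
  have hd2 : ∫ ω, Z ω ^ 2 ∂P = (1-ε) * (∫ ω, Z ω ^ 2 ∂P[|St X k 0])
      + ε * ∫ ω, Z ω ^ 2 ∂P[|St X k 1] := by
    have h := integral_decomp' (measurableSet_St hmeas k 0) hpos0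
      (by rwa [compl_St0 hvals k]) hZsq
    rwa [compl_St0 hvals k, condS_toReal hmeas hS hε k 0,
      show (P (St X k 1)).toReal = ε from condS_toReal hmeas hS hε k 1,
      show pr ε 0 = 1 - ε from rfl] at h
  have hj0 : (∫ ω, Z ω ∂P[|St X k 0])^2 ≤ ∫ ω, Z ω ^ 2 ∂P[|St X k 0] := by
    have h1 := variance_nonneg Z (P[|St X k 0])
    have h2 := variance_eq_sub (μ := P[|St X k 0]) (memLp_cond' hpos0 hZ2)
    rw [h2] at h1
    have : (P[|St X k 0])[Z ^ 2] = ∫ ω, Z ω ^ 2 ∂P[|St X k 0] := by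
      apply integral_congr_ae; filter_upwards with ω; simp
    rw [this] at h1
    nlinarith [h1]
  have hj1 : (∫ ω, Z ω ∂P[|St X k 1])^2 ≤ ∫ ω, Z ω ^ 2 ∂P[|St X k 1] := by
    have h1 := variance_nonneg Z (P[|St X k 1])
    have h2 := variance_eq_sub (μ := P[|St X k 1]) (memLp_cond' hpos1 hZ2)
    rw [h2] at h1
    have : (P[|St X k 1])[Z ^ 2] = ∫ ω, Z ω ^ 2 ∂P[|St X k 1] := by
      apply integral_congr_ae; filter_upwards with ω; simp
    rw [this] at h1
    nlinarith [h1]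
  have hvar' : variance Z P = ∫ ω, Z ω ^ 2 ∂P - (∫ ω, Z ω ∂P)^2 := by
    rw [hvar]; rfl
  rw [hvar', hd1, hd2]
  nlinarith [hj0, hj1, hε.1, hε.2, sq_nonneg ((∫ ω, Z ω ∂P[|St X k 0]) - ∫ ω, Z ω ∂P[|St X k 1])]

/-- Covariance factorization through the time-0 atoms. -/
lemma cov_factor (hmeas : ∀ k, Measurable (X k)) (hS : ConditionS P X ε r)
    (hε : ε ∈ Set.Ioc (0:ℝ) (1/2)) (n : ℕ) {Y Z : Ω → ℝ}
    (hYm : Measurable[pastSigma X 0] Y) (hZm : Measurable[futureSigma X (n:ℤ)] Z)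
    (hY2 : MemLp Y 2 P) (hZ2 : MemLp Z 2 P) :
    cov P Y Z = (1-ε) * ε
      * ((∫ ω, Y ω ∂P[|St X 0 0]) - ∫ ω, Y ω ∂P[|St X 0 1])
      * ((∫ ω, Z ω ∂P[|St X 0 0]) - ∫ ω, Z ω ∂P[|St X 0 1]) := by
  have h0n : (0:ℤ) ≤ (n:ℤ) := by exact_mod_cast Nat.zero_le n
  have hvals := hS.2.2.1
  have hpos0 := condS_pos hmeas hS hε 0 0
  have hpos1 := condS_pos hmeas hS hε 0 1
  have hZm0 : Measurable[futureSigma X 0] Z := hZm.mono (future_mono h0n) le_rfl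
  have hYi : Integrable Y P := hY2.integrable one_le_two
  have hZi : Integrable Z P := hZ2.integrable one_le_two
  have hYZi : Integrable (fun ω => Y ω * Z ω) P := integrable_mul_of_memL2' hY2 hZ2
  have hprod : ∀ i : Fin 2, ∫ ω, Y ω * Z ω ∂P[|St X 0 i]
      = (∫ ω, Y ω ∂P[|St X 0 i]) * ∫ ω, Z ω ∂P[|St X 0 i] := by
    intro i
    have hIF := indepFun_X hmeas hS hε 0 i hYm hZm0
    have h := hIF.integral_mul_eq_mul_integral
      (integrable_cond' (condS_pos hmeas hS hε 0 i) hYi).aestronglyMeasurable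
      (integrable_cond' (condS_pos hmeas hS hε 0 i) hZi).aestronglyMeasurable
    simpa [Pi.mul_apply] using h
  have hdec : ∀ {f : Ω → ℝ}, Integrable f P → ∫ ω, f ω ∂P
      = (1-ε) * (∫ ω, f ω ∂P[|St X 0 0]) + ε * ∫ ω, f ω ∂P[|St X 0 1] := by
    intro f hf
    have h := integral_decomp' (measurableSet_St hmeas 0 0) hpos0
      (by rwa [compl_St0 hvals 0]) hf
    rwa [compl_St0 hvals 0, condS_toReal hmeas hS hε 0 0,
      show (P (St X 0 1)).toReal = ε from condS_toReal hmeas hS hε 0 1,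
      show pr ε 0 = 1 - ε from rfl] at h
  rw [cov_eq hYi hZi hYZi, hdec hYZi, hprod 0, hprod 1, hdec hYi, hdec hZi]
  ring

lemma rhoX_eq (hmeas : ∀ k, Measurable (X k)) (hS : ConditionS P X ε r)
    (hε : ε ∈ Set.Ioc (0:ℝ) (1/2)) (hr : r ∈ Set.Ioo (0:ℝ) 1) (n : ℕ) (hn : 1 ≤ n) :
    rhoX P X n = r^n := by
  have h0n : (0:ℤ) ≤ (n:ℤ) := by exact_mod_cast Nat.zero_le n
  have hθ0 : (0:ℝ) < r^n := pow_pos hr.1 n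
  have hee : (0:ℝ) < (1-ε) * ε := by nlinarith [hε.1, hε.2]
  apply IsGreatest.csSup_eq
  constructor
  · -- the indicator pair attains rⁿ
    set Y := (St X 0 1).indicator (fun _ => (1:ℝ)) with hYdef
    set Z := (St X (n:ℤ) 1).indicator (fun _ => (1:ℝ)) with hZdef
    have hY' : MeasurableSet (St X 0 1) := measurableSet_St hmeas 0 1
    have hZ' : MeasurableSet (St X (n:ℤ) 1) := measurableSet_St hmeas (n:ℤ) 1
    have hYm : Measurable[pastSigma X 0] Y :=
      measurable_const.indicator (comap_le_past le_rfl _ (St_comap X 0 1))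
    have hZm : Measurable[futureSigma X (n:ℤ)] Z :=
      measurable_const.indicator (comap_le_future le_rfl _ (St_comap X (n:ℤ) 1))
    have hY2 : MemLp Y 2 P := memLp_indicator_const 2 hY' 1 (Or.inr (measure_ne_top _ _))
    have hZ2 : MemLp Z 2 P := memLp_indicator_const 2 hZ' 1 (Or.inr (measure_ne_top _ _))
    have hIi : ∀ (k : ℤ), ∫ ω, (St X k 1).indicator (fun _ => (1:ℝ)) ω ∂P = ε := by
      intro k
      rw [integral_indicator_const (1:ℝ) (measurableSet_St hmeas k 1), smul_eq_mul, mul_one]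
      exact condS_toReal hmeas hS hε k 1
    have hsq : ∀ (k : ℤ), ((St X k 1).indicator (fun _ => (1:ℝ))) ^ 2
        = (St X k 1).indicator (fun _ => (1:ℝ)) := by
      intro k; funext ω; by_cases h : ω ∈ St X k 1 <;> simp [h]
    have hvar : ∀ (k : ℤ), variance ((St X k 1).indicator (fun _ => (1:ℝ))) P
        = (1-ε) * ε := by
      intro k
      rw [variance_eq_sub (memLp_indicator_const 2 (measurableSet_St hmeas k 1) 1
        (Or.inr (measure_ne_top _ _)))]
      rw [show ∀ f : Ω → ℝ, P[f^2] = ∫ ω, (f^2) ω ∂P from fun f => rfl]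
      rw [hsq k]
      rw [show (∫ ω, ((St X k 1).indicator (fun _ => (1:ℝ))) ω ∂P) = ε from hIi k]
      try rw [show P[(St X k 1).indicator (fun _ => (1:ℝ))] = ε from hIi k]
      ring
    have hmul : (fun ω => Y ω * Z ω)
        = (St X 0 1 ∩ St X (n:ℤ) 1).indicator (fun _ => (1:ℝ)) := by
      funext ω
      by_cases h1 : ω ∈ St X 0 1 <;> by_cases h2 : ω ∈ St X (n:ℤ) 1 <;>
        simp [hYdef, hZdef, h1, h2]
    have hcov : cov P Y Z = (1-ε) * ε * r^n := by
      rw [cov_eq (hY2.integrable one_le_two) (hZ2.integrable one_le_two)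
        (by rw [hmul]; exact (integrable_const 1).indicator (hY'.inter hZ')), hmul]
      rw [integral_indicator_const (1:ℝ) (hY'.inter hZ'), smul_eq_mul, mul_one, measureReal_def,
        joint hmeas hS hε hr n hn 1 1, hIi 0, hIi (n:ℤ)]
      have : lam ε (r^n) 1 1 = ε^2 + (1-ε)*ε*(r^n) := by simp [lam]
      rw [this]; ring
    refine ⟨Y, Z, hYm, hZm, hY2, hZ2, ?_, ?_, ?_⟩
    · rw [hvar 0]; exact hee
    · rw [hvar (n:ℤ)]; exact hee
    · rw [corr, hcov, hvar 0, hvar (n:ℤ), Real.mul_self_sqrt hee.le]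
      rw [abs_of_nonneg (by positivity)]
      exact (mul_div_cancel_left₀ _ hee.ne').symm
  · rintro x ⟨Y, Z, hYm, hZm, hY2, hZ2, hvY, hvZ, rfl⟩
    have hZm0 : Measurable[futureSigma X 0] Z := hZm.mono (future_mono h0n) le_rfl
    have hcov := cov_factor hmeas hS hε n hYm hZm hY2 hZ2
    have hzd := future_z_diff hmeas hS hε hr n hn hZm (hZ2.integrable one_le_two)
    set dy := (∫ ω, Y ω ∂P[|St X 0 0]) - ∫ ω, Y ω ∂P[|St X 0 1] with hdy
    set dw := (∫ ω, Z ω ∂P[|St X (n:ℤ) 0]) - ∫ ω, Z ω ∂P[|St X (n:ℤ) 1] with hdw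
    have hcov2 : cov P Y Z = (1-ε) * ε * r^n * (dy * dw) := by
      rw [hcov, hzd]; ring
    have hvY' := variance_lower hmeas hS hε 0 hY2
    have hvZ' := variance_lower hmeas hS hε (n:ℤ) hZ2
    rw [← hdy] at hvY'
    rw [← hdw] at hvZ'
    have hsY : Real.sqrt ((1-ε)*ε) * |dy| ≤ Real.sqrt (variance Y P) := by
      rw [← Real.sqrt_sq_eq_abs, ← Real.sqrt_mul hee.le]
      exact Real.sqrt_le_sqrt hvY'
    have hsZ : Real.sqrt ((1-ε)*ε) * |dw| ≤ Real.sqrt (variance Z P) := by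
      rw [← Real.sqrt_sq_eq_abs, ← Real.sqrt_mul hee.le]
      exact Real.sqrt_le_sqrt hvZ'
    have hsqY : 0 < Real.sqrt (variance Y P) := Real.sqrt_pos.2 hvY
    have hsqZ : 0 < Real.sqrt (variance Z P) := Real.sqrt_pos.2 hvZ
    rw [corr, abs_div, div_le_iff₀ (by positivity)]
    rw [abs_of_nonneg (by positivity : (0:ℝ) ≤ Real.sqrt (variance Y P) * Real.sqrt (variance Z P))]
    have habs : |cov P Y Z| = ((1-ε)*ε) * |dy| * |dw| * r^n := by
      rw [hcov2, abs_mul ((1-ε)*ε*r^n) (dy*dw),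
        abs_of_nonneg (mul_nonneg hee.le hθ0.le), abs_mul dy dw]
      ring
    rw [habs]
    have hineq : ((1-ε)*ε) * |dy| * |dw|
        ≤ Real.sqrt (variance Y P) * Real.sqrt (variance Z P) := by
      have h1 : ((1-ε)*ε) * |dy| * |dw|
          = (Real.sqrt ((1-ε)*ε) * |dy|) * (Real.sqrt ((1-ε)*ε) * |dw|) := by
        rw [show (Real.sqrt ((1-ε)*ε) * |dy|) * (Real.sqrt ((1-ε)*ε) * |dw|)
            = (Real.sqrt ((1-ε)*ε) * Real.sqrt ((1-ε)*ε)) * (|dy| * |dw|) by ring,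
          Real.mul_self_sqrt hee.le]
        ring
      rw [h1]
      exact mul_le_mul hsY hsZ (by positivity) hsqY.le
    nlinarith [hineq, hθ0]

end AuxRho
theorem statement_7 {Ω : Type*} [MeasurableSpace Ω] (P : Measure Ω)
    [IsProbabilityMeasure P] (ε r : ℝ) (hε : ε ∈ Set.Ioc (0 : ℝ) (1/2))
    (hr : r ∈ Set.Ioo (0 : ℝ) 1) (X : ℤ → Ω → ℝ) (hmeas : ∀ k, Measurable (X k))
    (hS : ConditionS P X ε r) :
    (∀ n : ℕ, 1 ≤ n → ∀ i j : Fin 2,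
      ProbabilityTheory.cond P {ω | X 0 ω = ((i : ℕ) : ℝ)}
          {ω | X (n : ℤ) ω = ((j : ℕ) : ℝ)}
        = ENNReal.ofReal (pmat ε (r ^ n) i j)) ∧
    ∀ n : ℕ, 1 ≤ n →
      rhoX P X n = r ^ n ∧
      alphaX P X n = (1 - ε) * ε * r ^ n ∧ ε * r ^ n / 2 ≤ alphaX P X n ∧
      betaX P X n = 2 * (1 - ε) * ε * r ^ n ∧ betaX P X n ≤ 2 * ε * r ^ n := by
  constructor
  · intro n hn i j
    exact cond_step hmeas hS hε hr n hn i j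
  · intro n hn
    have hθ0 : (0:ℝ) < r ^ n := pow_pos hr.1 n
    refine ⟨rhoX_eq hmeas hS hε hr n hn, ?_, ?_, ?_, ?_⟩
    · rw [alphaX_eq hmeas hS hε hr n hn]
    · rw [alphaX_eq hmeas hS hε hr n hn]
      nlinarith [mul_pos hε.1 hθ0, hε.2]
    · rw [betaX_eq hmeas hS hε hr n hn]; ring
    · rw [betaX_eq hmeas hS hε hr n hn]
      nlinarith [mul_pos hε.1 hθ0, hε.2, hε.1]

end Bradley
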